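/- For the attractive two-species exclusion process, the increasing coupling defined by the min-formulas allows no exchanges of discrepancies (i.e. G^{k;l}_{α,β;γ,δ}(z) = 0 whenever (α−γ)(β−δ) < 0 and |k−l| > |α−γ| ∨ |β−δ|) if and only if Γ^2_{1,−1}(z) ≤ Γ^1_{0,0}(z) for z = ±1. -/

import Mathlib

/-!
The coupling rate `G^{k;l}` is a minimum of two terms, each of which vanishes with the
corresponding rate `Γ`. Since `Γ^k` is nonzero only for `k ∈ {1, 2}`, and `Γ^2` only for the
pair `(1, -1)`, a rate with `|k - l| ≥ 2` can be nonzero only if `{k, l} = {0, 2}`, the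
pair `(1, -1)` carries the jump of size 2 and, the discrepancies having opposite signs and size
less than 2, the other pair is `(0, 0)`. There the boundary formula evaluates to
`(Γ^2_{1,-1} - Γ^1_{0,0})⁺`.
-/

open Finset

theorem tsum_tail_eq_sum_Ioc {M : Type*} [AddCommMonoid M] [TopologicalSpace M] {f : ℕ → M}
    {n : ℕ} (hf : ∀ k, n < k → f k = 0) (k : ℕ) :
    ∑' k', (if k < k' then f k' else 0) = ∑ k' ∈ Ioc k n, f k' := by
  rw [tsum_eq_sum (s := Ioc k n)]
  · exact sum_congr rfl fun k' hk' => if_pos (mem_Ioc.1 hk').1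
  · intro k' hk'
    rw [mem_Ioc, not_and_or, not_lt, not_le] at hk'
    split_ifs with hkk'
    · exact hf k' (hk'.resolve_left hkk'.not_ge)
    · rfl

noncomputable def tailSum (Γ : ℤ → ℤ → ℕ → ℝ) (α β : ℤ) (k : ℕ) : ℝ :=
  ∑' k' : ℕ, if k < k' then Γ α β k' else 0

structure IsMinCoupling (Γ : ℤ → ℤ → ℕ → ℝ) (G : ℤ → ℤ → ℤ → ℤ → ℕ → ℕ → ℝ) : Prop where
  pos_pos : ∀ α β γ δ k l, 1 ≤ k → 1 ≤ l → G α β γ δ k l =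
    min (Γ α β k -
          min (Γ α β k) (tailSum Γ γ δ l - min (tailSum Γ α β k) (tailSum Γ γ δ l)))
        (Γ γ δ l -
          min (Γ γ δ l) (tailSum Γ α β k - min (tailSum Γ α β k) (tailSum Γ γ δ l)))
  pos_zero : ∀ α β γ δ k, 1 ≤ k → G α β γ δ k 0 =
    Γ α β k -
      min (Γ α β k) (tailSum Γ γ δ 0 - min (tailSum Γ α β k) (tailSum Γ γ δ 0))
  zero_pos : ∀ α β γ δ l, 1 ≤ l → G α β γ δ 0 l =
    Γ γ δ l -
      min (Γ γ δ l) (tailSum Γ α β 0 - min (tailSum Γ α β 0) (tailSum Γ γ δ l))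

def NoExchange (G : ℤ → ℤ → ℤ → ℤ → ℕ → ℕ → ℝ) : Prop :=
  ∀ α β γ δ : ℤ,
    α ∈ ({-1, 0, 1} : Set ℤ) → β ∈ ({-1, 0, 1} : Set ℤ) →
    γ ∈ ({-1, 0, 1} : Set ℤ) → δ ∈ ({-1, 0, 1} : Set ℤ) →
    ∀ k l : ℕ, (α - γ) * (β - δ) < 0 →
      max |α - γ| |β - δ| < |(k : ℤ) - l| → G α β γ δ k l = 0

namespace IsMinCoupling

variable {Γ : ℤ → ℤ → ℕ → ℝ} {G : ℤ → ℤ → ℤ → ℤ → ℕ → ℕ → ℝ} {α β γ δ : ℤ} {k l : ℕ}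

theorem swap (hG : IsMinCoupling Γ G) :
    IsMinCoupling Γ fun α β γ δ k l => G γ δ α β l k where
  pos_pos α β γ δ k l hk hl := by
    rw [hG.pos_pos γ δ α β l k hl hk, min_comm (tailSum Γ γ δ l), min_comm]
  pos_zero α β γ δ k hk := by
    rw [hG.zero_pos γ δ α β k hk, min_comm (tailSum Γ γ δ 0)]
  zero_pos α β γ δ l hl := by
    rw [hG.pos_zero γ δ α β l hl, min_comm (tailSum Γ γ δ l)]

theorem eq_zero_of_rate_eq_zero (hG : IsMinCoupling Γ G) (hk : 1 ≤ k)
    (hΓ : Γ α β k = 0) : G α β γ δ k l = 0 := by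
  have hvanish : ∀ s t : ℝ, (0 : ℝ) - min 0 (s - min t s) = 0 := fun s t => by
    rw [min_eq_left (sub_nonneg.2 (min_le_right t s)), sub_self]
  rcases Nat.eq_zero_or_pos l with rfl | hl
  · rw [hG.pos_zero α β γ δ k hk, hΓ, hvanish]
  · rw [hG.pos_pos α β γ δ k l hk hl, hΓ, hvanish]
    exact min_eq_left (sub_nonneg.2 (min_le_left _ _))

theorem zero_left_eq_zero_iff (hG : IsMinCoupling Γ G) (hl : 1 ≤ l)
    (hS₀ : 0 ≤ tailSum Γ α β 0) (hS : tailSum Γ γ δ l = 0) :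
    G α β γ δ 0 l = 0 ↔ Γ γ δ l ≤ tailSum Γ α β 0 := by
  rw [hG.zero_pos α β γ δ l hl, hS, min_eq_right hS₀, sub_zero, sub_eq_zero, eq_comm,
    min_eq_left_iff]

end IsMinCoupling

def twoSpeciesRate (c01 c2 c11 c00 c10 : ℝ) (α β : ℤ) (k : ℕ) : ℝ :=
  if α = 0 ∧ β = -1 ∧ k = 1 then c01
  else if α = 1 ∧ β = -1 ∧ k = 2 then c2
  else if α = 1 ∧ β = -1 ∧ k = 1 then c11
  else if α = 0 ∧ β = 0 ∧ k = 1 then c00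
  else if α = 1 ∧ β = 0 ∧ k = 1 then c10
  else 0

section TwoSpecies

variable {c01 c2 c11 c00 c10 : ℝ} {G : ℤ → ℤ → ℤ → ℤ → ℕ → ℕ → ℝ} {α β γ δ : ℤ} {k l : ℕ}

theorem twoSpeciesRate_eq_zero_of_two_lt (hk : 2 < k) :
    twoSpeciesRate c01 c2 c11 c00 c10 α β k = 0 := by
  simp only [twoSpeciesRate]
  split_ifs <;> first | rfl | omega

theorem eq_of_twoSpeciesRate_ne_zero (hk : 2 ≤ k)
    (h : twoSpeciesRate c01 c2 c11 c00 c10 α β k ≠ 0) : α = 1 ∧ β = -1 ∧ k = 2 := by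
  simp only [twoSpeciesRate] at h
  split_ifs at h <;> first | omega | exact absurd rfl h

theorem tailSum_twoSpeciesRate (α β : ℤ) (k : ℕ) :
    tailSum (twoSpeciesRate c01 c2 c11 c00 c10) α β k =
      ∑ k' ∈ Ioc k 2, twoSpeciesRate c01 c2 c11 c00 c10 α β k' :=
  tsum_tail_eq_sum_Ioc (fun _ => twoSpeciesRate_eq_zero_of_two_lt) k

theorem tailSum_twoSpeciesRate_zero_zero_zero :
    tailSum (twoSpeciesRate c01 c2 c11 c00 c10) 0 0 0 = c00 := by
  simp [tailSum_twoSpeciesRate, twoSpeciesRate, show Ioc 0 2 = {1, 2} from rfl]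

theorem tailSum_twoSpeciesRate_of_two_le (hk : 2 ≤ k) :
    tailSum (twoSpeciesRate c01 c2 c11 c00 c10) α β k = 0 := by
  rw [tailSum_twoSpeciesRate, Ioc_eq_empty (by omega), sum_empty]

theorem eq_zero_of_exchange_with_one_neg_one (hα : α ≤ 1) (hprod : (α - 1) * (β - -1) < 0)
    (hmax : max |α - 1| |β - -1| < 2) : α = 0 ∧ β = 0 := by
  rw [max_lt_iff, abs_lt, abs_lt] at hmax
  rcases mul_neg_iff.1 hprod with h | h <;> omega

-- `G 0 0 1 (-1) 0 2` is the paper's `G^{0;2}_{0,0;1,-1}`.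
theorem IsMinCoupling.twoSpecies_exchange_eq_zero_iff (h00 : 0 ≤ c00)
    (hG : IsMinCoupling (twoSpeciesRate c01 c2 c11 c00 c10) G) :
    G 0 0 1 (-1) 0 2 = 0 ↔ c2 ≤ c00 := by
  rw [hG.zero_left_eq_zero_iff (by norm_num) (tailSum_twoSpeciesRate_zero_zero_zero ▸ h00)
    (tailSum_twoSpeciesRate_of_two_le le_rfl), tailSum_twoSpeciesRate_zero_zero_zero]
  simp [twoSpeciesRate]

theorem IsMinCoupling.twoSpecies_eq_zero_of_le (h00 : 0 ≤ c00) (hle : c2 ≤ c00)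
    (hG : IsMinCoupling (twoSpeciesRate c01 c2 c11 c00 c10) G)
    (hα : α ∈ ({-1, 0, 1} : Set ℤ)) (hprod : (α - γ) * (β - δ) < 0)
    (hmax : max |α - γ| |β - δ| < |(k : ℤ) - l|) (hkl : k ≤ l) : G α β γ δ k l = 0 := by
  rw [abs_sub_comm (k : ℤ), abs_of_nonneg (sub_nonneg.2 (Int.ofNat_le.2 hkl))] at hmax
  have hdisc : 1 ≤ max |α - γ| |β - δ| :=
    le_max_of_le_left (Int.one_le_abs (left_ne_zero_of_mul hprod.ne))
  by_cases hΓ : twoSpeciesRate c01 c2 c11 c00 c10 γ δ l = 0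
  · exact hG.swap.eq_zero_of_rate_eq_zero (by omega) hΓ
  obtain ⟨rfl, rfl, rfl⟩ := eq_of_twoSpeciesRate_ne_zero (by omega) hΓ
  obtain rfl : k = 0 := by omega
  have hα₁ : α ≤ 1 := by
    simp only [Set.mem_insert_iff, Set.mem_singleton_iff] at hα
    omega
  obtain ⟨rfl, rfl⟩ := eq_zero_of_exchange_with_one_neg_one hα₁ hprod (by omega)
  exact (hG.twoSpecies_exchange_eq_zero_iff h00).2 hle

theorem IsMinCoupling.twoSpecies_noExchange_iff (h00 : 0 ≤ c00)
    (hG : IsMinCoupling (twoSpeciesRate c01 c2 c11 c00 c10) G) :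
    NoExchange G ↔ c2 ≤ c00 := by
  refine ⟨fun h => ?_, fun hle α β γ δ hα _ hγ _ k l hprod hmax => ?_⟩
  · exact (hG.twoSpecies_exchange_eq_zero_iff h00).1 <|
      h 0 0 1 (-1) (by simp) (by simp) (by simp) (by simp) 0 2 (by norm_num) (by norm_num)
  rcases le_total k l with hkl | hlk
  · exact hG.twoSpecies_eq_zero_of_le h00 hle hα hprod hmax hkl
  · have hprod' : (γ - α) * (δ - β) < 0 := by
      rwa [← neg_sub α γ, ← neg_sub β δ, neg_mul_neg]
    have hmax' : max |γ - α| |δ - β| < |(l : ℤ) - k| := by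
      rwa [abs_sub_comm γ, abs_sub_comm δ, abs_sub_comm (l : ℤ)]
    have hswap := hG.swap.twoSpecies_eq_zero_of_le h00 hle hγ hprod' hmax' hlk
    exact hswap

end TwoSpecies

theorem stmt18_general (c01 c2 c11 c00 c10 : Bool → ℝ)
    (h00 : ∀ z, 0 ≤ c00 z)
    (Γ : Bool → ℤ → ℤ → ℕ → ℝ)
    (hΓ : ∀ z α β k, Γ z α β k =
      if α = 0 ∧ β = -1 ∧ k = 1 then c01 z
      else if α = 1 ∧ β = -1 ∧ k = 2 then c2 z
      else if α = 1 ∧ β = -1 ∧ k = 1 then c11 z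
      else if α = 0 ∧ β = 0 ∧ k = 1 then c00 z
      else if α = 1 ∧ β = 0 ∧ k = 1 then c10 z
      else 0)
    (S : Bool → ℤ → ℤ → ℕ → ℝ)
    (hS : ∀ z α β k, S z α β k = ∑' k' : ℕ, if k < k' then Γ z α β k' else 0)
    (G : Bool → ℤ → ℤ → ℤ → ℤ → ℕ → ℕ → ℝ)
    (hG : ∀ z α β γ δ k l, 1 ≤ k → 1 ≤ l → G z α β γ δ k l =
      min (Γ z α β k - min (Γ z α β k) (S z γ δ l - min (S z α β k) (S z γ δ l)))
          (Γ z γ δ l - min (Γ z γ δ l) (S z α β k - min (S z α β k) (S z γ δ l))))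
    (hGk0 : ∀ z α β γ δ k, 1 ≤ k → G z α β γ δ k 0 =
      Γ z α β k - min (Γ z α β k) (S z γ δ 0 - min (S z α β k) (S z γ δ 0)))
    (hG0l : ∀ z α β γ δ l, 1 ≤ l → G z α β γ δ 0 l =
      Γ z γ δ l - min (Γ z γ δ l) (S z α β 0 - min (S z α β 0) (S z γ δ l))) :
    (∀ z : Bool, ∀ α β γ δ : ℤ,
      α ∈ ({-1, 0, 1} : Set ℤ) → β ∈ ({-1, 0, 1} : Set ℤ) →
      γ ∈ ({-1, 0, 1} : Set ℤ) → δ ∈ ({-1, 0, 1} : Set ℤ) →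
      ∀ k l : ℕ, (α - γ) * (β - δ) < 0 →
        max |α - γ| |β - δ| < |(k : ℤ) - l| → G z α β γ δ k l = 0)
    ↔ (∀ z : Bool, c2 z ≤ c00 z) := by
  obtain rfl : Γ = fun z => twoSpeciesRate (c01 z) (c2 z) (c11 z) (c00 z) (c10 z) := by
    funext z α β k
    exact hΓ z α β k
  obtain rfl : S = fun z => tailSum (twoSpeciesRate (c01 z) (c2 z) (c11 z) (c00 z) (c10 z)) := by
    funext z α β k
    exact hS z α β k
  exact forall_congr' fun z =>
    (IsMinCoupling.mk (hG z) (hGk0 z) (hG0l z)).twoSpecies_noExchange_iff (h00 z)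

/-- For the attractive two-species exclusion process, the increasing coupling
allows no exchanges of discrepancies iff Γ²₁,₋₁(z) ≤ Γ¹₀,₀(z) for z = ±1. -/
theorem stmt18 (c01 c2 c11 c00 c10 : Bool → ℝ)
    (h01 : ∀ z, 0 ≤ c01 z) (h2 : ∀ z, 0 ≤ c2 z) (h11 : ∀ z, 0 ≤ c11 z)
    (h00 : ∀ z, 0 ≤ c00 z) (h10 : ∀ z, 0 ≤ c10 z)
    (hattr : ∀ z : Bool,
      max (c2 z) (c00 z) ≤ min (c01 z) (c10 z) ∧
      max (c01 z) (c10 z) ≤ c11 z + c2 z)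
    (Γ : Bool → ℤ → ℤ → ℕ → ℝ)
    (hΓ : ∀ z α β k, Γ z α β k =
      if α = 0 ∧ β = -1 ∧ k = 1 then c01 z
      else if α = 1 ∧ β = -1 ∧ k = 2 then c2 z
      else if α = 1 ∧ β = -1 ∧ k = 1 then c11 z
      else if α = 0 ∧ β = 0 ∧ k = 1 then c00 z
      else if α = 1 ∧ β = 0 ∧ k = 1 then c10 z
      else 0)
    (S : Bool → ℤ → ℤ → ℕ → ℝ)
    (hS : ∀ z α β k, S z α β k = ∑' k' : ℕ, if k < k' then Γ z α β k' else 0)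
    (G : Bool → ℤ → ℤ → ℤ → ℤ → ℕ → ℕ → ℝ)
    (hG : ∀ z α β γ δ k l, 1 ≤ k → 1 ≤ l → G z α β γ δ k l =
      min (Γ z α β k - min (Γ z α β k) (S z γ δ l - min (S z α β k) (S z γ δ l)))
          (Γ z γ δ l - min (Γ z γ δ l) (S z α β k - min (S z α β k) (S z γ δ l))))
    (hGk0 : ∀ z α β γ δ k, 1 ≤ k → G z α β γ δ k 0 =
      Γ z α β k - min (Γ z α β k) (S z γ δ 0 - min (S z α β k) (S z γ δ 0)))
    (hG0l : ∀ z α β γ δ l, 1 ≤ l → G z α β γ δ 0 l =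
      Γ z γ δ l - min (Γ z γ δ l) (S z α β 0 - min (S z α β 0) (S z γ δ l)))
    (hG00 : ∀ z α β γ δ, G z α β γ δ 0 0 = 0) :
    (∀ z : Bool, ∀ α β γ δ : ℤ,
      α ∈ ({-1, 0, 1} : Set ℤ) → β ∈ ({-1, 0, 1} : Set ℤ) →
      γ ∈ ({-1, 0, 1} : Set ℤ) → δ ∈ ({-1, 0, 1} : Set ℤ) →
      ∀ k l : ℕ, (α - γ) * (β - δ) < 0 →
        max |α - γ| |β - δ| < |(k : ℤ) - l| → G z α β γ δ k l = 0)
    ↔ (∀ z : Bool, c2 z ≤ c00 z) :=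
  stmt18_general c01 c2 c11 c00 c10 h00 Γ hΓ S hS G hG hGk0 hG0l
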